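/- arXiv:1608.08930 — 3 statements merged into one kernel-verified Lean document; each statement's English description precedes it below -/
import Mathlib

section
/- Let y be the reference deformation y_α(ξ) = ξ + p_α and let G be the identity matrix I_{d×d} when n = d (resp. the n×d matrix with upper block I_{d×d} and zero last row when n = d+1, with each p_α embedded in ℝ^n by appending a zero component). Then the following two conditions are equivalent: (i) ∂_p Ŵ(G, p) = 0, i.e. the gradient of p ↦ V̂((Gρ + p_β − p_α)_{(ραβ)∈R}) vanishes at the reference shifts; (ii) Σ_{ξ∈L} Σ_{(ραβ)∈R} V̂_{,(ραβ)}(Dy(ξ)) · D_{(ραβ)}v(ξ) = 0 for every v ∈ 𝒰_0. -/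
/-!
Both conditions are statements about the linear form `L = δV̂(Dy)`. By the chain rule,
`∂_p Ŵ(G, p) = L ∘ Δ` with `Δ q = (q_β - q_α)_{(ραβ) ∈ R}`. If a test displacement is
`v = c + u` with `c` periodic under the lattice directions `R₁` and `u` finitely supported,
then `c` cancels from every bond and the bond sum telescopes: `⟨δE(y), v⟩ = L (Δ ∑_ξ u(ξ))`.
A displacement supported at a single site realises any `Δ w`, which gives one direction.
For the other, every `v ∈ 𝒰₀` has this form: `u₀` is `R₁`-periodic off a finite set `T`, and
for two independent directions `b₀, b₁ ∈ R₁` the eventual value `c(ξ)` of `u₀` along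
`ξ + ℕ b₀` is `R₁`-periodic and agrees with `u₀` except at the finitely many sites whose
`b₀`- and `b₁`-rays both meet `T`.
-/

open scoped BigOperators
noncomputable section

/-- Lattice indices: `ξ : Fin d → ℤ` labels the lattice site `F ξ ∈ F ℤ^d`. -/
abbrev ZLat (d : ℕ) := Fin d → ℤ

/-- Euclidean vectors. -/
abbrev Vec (m : ℕ) := EuclideanSpace ℝ (Fin m)

/-- Physical position of the lattice site with index `ξ`: `F ξ`. -/
def latpos {d : ℕ} (F : Matrix (Fin d) (Fin d) ℝ) (ξ : ZLat d) : Vec d :=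
  WithLp.toLp 2 fun i => ∑ j, F i j * (ξ j : ℝ)

/-- Embedding of `ℝ^d` into `ℝ^n` (`n = d` or `n = d+1`) by appending zeros. -/
def embedV {d n : ℕ} (x : Vec d) : Vec n :=
  WithLp.toLp 2 fun i => if h : (i : ℕ) < d then x ⟨i, h⟩ else 0

/-- The setting of a multilattice `⋃_α (F ℤ^d + p_α)` together with a finite
interaction range `R` and site potentials `V̂_ξ` (equal to a homogeneous
potential `V̂` outside the defect ball of radius `Rdef`). -/
structure MLSetting (d S n : ℕ) where
  hd : d = 2 ∨ d = 3
  hn : n = d ∨ (d = 2 ∧ n = d + 1)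
  hS : 0 < S
  F : Matrix (Fin d) (Fin d) ℝ
  hdetF : F.det = 1
  p : Fin S → Vec d
  hp0 : p ⟨0, hS⟩ = 0
  R : Finset (ZLat d × Fin S × Fin S)
  hR_noself : ∀ α : Fin S, ((0 : ZLat d), α, α) ∉ R
  hR_span : ∀ α : Fin S,
    Submodule.span ℝ {x : Vec d | ∃ ρ : ZLat d, (ρ, α, α) ∈ R ∧ x = latpos F ρ} = ⊤
  hR_pairs : ∀ α β : Fin S, α ≠ β → ((0 : ZLat d), α, β) ∈ R
  /-- the site potentials `V̂_ξ` -/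
  Vsite : ZLat d → ((↥R → Vec n) → ℝ)
  /-- the homogeneous (defect-free) potential `V̂` -/
  Vhom : (↥R → Vec n) → ℝ
  Rdef : ℝ
  hRdef : 0 < Rdef
  hVsite_hom : ∀ ξ : ZLat d, Rdef ≤ ‖latpos F ξ‖ → Vsite ξ = Vhom
  hV_smooth : ∀ ξ : ZLat d, ContDiff ℝ 4 (Vsite ξ)
  hVhom_smooth : ContDiff ℝ 4 Vhom
  hV_bdd : ∃ C : ℝ, ∀ (ξ : ZLat d) (g : ↥R → Vec n) (j : ℕ), j ≤ 4 →
      ‖iteratedFDeriv ℝ j (Vsite ξ) g‖ ≤ C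
  hVhom_bdd : ∃ C : ℝ, ∀ (g : ↥R → Vec n) (j : ℕ), j ≤ 4 →
      ‖iteratedFDeriv ℝ j Vhom g‖ ≤ C

/-- Multilattice displacements `u = (u_α(ξ))`. -/
abbrev Disp (d S n : ℕ) := ZLat d → Fin S → Vec n

namespace MLSetting

variable {d S n : ℕ} (A : MLSetting d S n)

/-- The index `α = 0` of the base species. -/
def idx0 : Fin S := ⟨0, A.hS⟩

/-- The reference finite differences `D y (ξ) = (F ρ + p_β - p_α)_{(ραβ) ∈ R}`
(independent of `ξ`). -/
def yvec : ↥A.R → Vec n :=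
  fun e => embedV (latpos A.F e.1.1 + A.p e.1.2.2 - A.p e.1.2.1)

/-- Finite differences `D_{(ραβ)} u (ξ) = u_β(ξ+ρ) - u_α(ξ)`. -/
def Dm (u : Disp d S n) (ξ : ZLat d) : ↥A.R → Vec n :=
  fun e => u (ξ + e.1.1) e.1.2.2 - u ξ e.1.2.1

/-- Square of the natural discrete energy norm `‖u‖_{a1}^2`. -/
def a1normSq (u : Disp d S n) : ℝ := ∑' ξ : ZLat d, ∑ e : ↥A.R, ‖A.Dm u ξ e‖ ^ 2

/-- The discrete energy norm `‖u‖_{a1}`. -/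
def a1norm (u : Disp d S n) : ℝ := Real.sqrt (A.a1normSq u)

/-- Membership in the energy space `U` (finite energy norm). -/
def FiniteEnergy (u : Disp d S n) : Prop :=
  Summable (fun ξ : ZLat d => ∑ e : ↥A.R, ‖A.Dm u ξ e‖ ^ 2)

/-- The projection `R_1` of the interaction range onto lattice directions. -/
def R1 : Finset (ZLat d) := A.R.image (fun e => e.1)

/-- Membership in the test space `U_0`: `D u_0` and `u_α - u_0` have compact
support. -/
def InU0 (u : Disp d S n) : Prop :=
  ∃ T : Finset (ZLat d), ∀ ξ : ZLat d, ξ ∉ T →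
    (∀ ρ ∈ A.R1, u (ξ + ρ) A.idx0 = u ξ A.idx0) ∧ ∀ α : Fin S, u ξ α = u ξ A.idx0

/-- First variation `⟨δE^a(u), v⟩` of the atomistic energy. -/
def dE (u v : Disp d S n) : ℝ :=
  ∑' ξ : ZLat d, fderiv ℝ (A.Vsite ξ) (A.yvec + A.Dm u ξ) (A.Dm v ξ)

/-- First variation `⟨δE^a_hom(u), v⟩` of the homogeneous energy. -/
def dEhom (u v : Disp d S n) : ℝ :=
  ∑' ξ : ZLat d, fderiv ℝ A.Vhom (A.yvec + A.Dm u ξ) (A.Dm v ξ)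

/-- Second variation `⟨δ²E^a(u)v, w⟩`. -/
def d2E (u v w : Disp d S n) : ℝ :=
  ∑' ξ : ZLat d, iteratedFDeriv ℝ 2 (A.Vsite ξ) (A.yvec + A.Dm u ξ) ![A.Dm v ξ, A.Dm w ξ]

/-- Second variation `⟨δ²E^a_hom(u)v, w⟩`. -/
def d2Ehom (u v w : Disp d S n) : ℝ :=
  ∑' ξ : ZLat d, iteratedFDeriv ℝ 2 A.Vhom (A.yvec + A.Dm u ξ) ![A.Dm v ξ, A.Dm w ξ]

/-- Phonon stability of the reference configuration: the reference state is an
equilibrium of `E^a_hom` and `δ²E^a_hom(0)` is coercive w.r.t. `‖·‖_{a1}`. -/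
def PhononStable : Prop :=
  (∀ v : Disp d S n, A.InU0 v → A.dEhom 0 v = 0) ∧
  ∃ γ : ℝ, 0 < γ ∧ ∀ v : Disp d S n, A.InU0 v → γ * A.a1normSq v ≤ A.d2Ehom 0 v v

end MLSetting

/-- Finite difference `D_ρ f(ξ) = f(ξ+ρ) - f(ξ)` of a lattice function. -/
def Dfd {d : ℕ} {E : Type*} [AddCommGroup E] (ρ : ZLat d) (f : ZLat d → E) : ZLat d → E :=
  fun ξ => f (ξ + ρ) - f ξ

/-- Iterated finite difference `D_{ρ⃗} = D_{ρ_1} ⋯ D_{ρ_j}`. -/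
def DfdIter {d : ℕ} {E : Type*} [AddCommGroup E] :
    ∀ {j : ℕ}, (Fin j → ZLat d) → (ZLat d → E) → (ZLat d → E)
  | 0, _, f => f
  | (_ + 1), ρs, f => Dfd (ρs 0) (DfdIter (fun i => ρs i.succ) f)

open Filter

section PeriodicOffFinite

variable {G E : Type*} [AddCommGroup G]

theorem apply_add_nsmul_eq_of_forall_notMem {f : G → E} {P : Set G} {T : Finset G}
    (hf : ∀ ξ ∉ T, ∀ ρ ∈ P, f (ξ + ρ) = f ξ) {b ξ : G} (hb : b ∈ P)
    (hξ : ∀ k : ℕ, ξ + k • b ∉ T) (m : ℕ) : f (ξ + m • b) = f ξ := by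
  induction m with
  | zero => simp
  | succ m ih => rw [succ_nsmul, ← add_assoc, hf _ (hξ m) b hb, ih]

theorem finite_setOf_add_zsmul_add_zsmul_mem {b₀ b₁ : G} (hind : LinearIndependent ℤ ![b₀, b₁])
    (T : Finset G) (x : G) : {p : ℤ × ℤ | x + p.1 • b₀ + p.2 • b₁ ∈ T}.Finite := by
  refine T.finite_toSet.preimage fun p _ q _ hpq => ?_
  have h := LinearIndependent.pair_iff.1 hind (p.1 - q.1) (p.2 - q.2) (by
    simp only [sub_smul]
    linear_combination (norm := abel_nf) hpq)
  exact Prod.ext (sub_eq_zero.1 h.1) (sub_eq_zero.1 h.2)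

theorem eventually_forall_add_nsmul_add_nsmul_notMem {b₀ b₁ : G}
    (hind : LinearIndependent ℤ ![b₀, b₁]) (T : Finset G) (x : G) :
    ∀ᶠ m : ℕ in atTop, ∀ k : ℕ, x + m • b₀ + k • b₁ ∉ T ∧ x + k • b₀ + m • b₁ ∉ T := by
  have h := (finite_setOf_add_zsmul_add_zsmul_mem hind T x).eventually_all.2 fun p _ =>
    (tendsto_natCast_atTop_atTop.eventually_gt_atTop p.1).and
      (tendsto_natCast_atTop_atTop.eventually_gt_atTop p.2)
  filter_upwards [h] with m hm k
  exact ⟨fun hT => (hm (m, k) (by simpa using hT)).1.false,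
    fun hT => (hm (k, m) (by simpa using hT)).2.false⟩

theorem exists_periodic_eventuallyEq_cofinite {f : G → E} {P : Set G} {T : Finset G}
    (hf : ∀ ξ ∉ T, ∀ ρ ∈ P, f (ξ + ρ) = f ξ) {b₀ b₁ : G} (hb₀ : b₀ ∈ P) (hb₁ : b₁ ∈ P)
    (hind : LinearIndependent ℤ ![b₀, b₁]) :
    ∃ c : G → E, (∀ ρ ∈ P, Function.Periodic c ρ) ∧ f =ᶠ[cofinite] c := by
  choose N hN using fun x => eventually_atTop.1
    (eventually_forall_add_nsmul_add_nsmul_notMem hind T x)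
  have far₀ (x : G) (m : ℕ) (hm : N x ≤ m) : x + m • b₀ ∉ T := by
    simpa using (hN x m hm 0).1
  have far₁₀ (x : G) (m : ℕ) (hm : N x ≤ m) (k : ℕ) : x + m • b₁ + k • b₀ ∉ T := by
    simpa [add_right_comm] using (hN x m hm k).2
  set c : G → E := fun x => f (x + N x • b₀)
  have hc_eq (x : G) (m : ℕ) (hm : N x ≤ m) : f (x + m • b₀) = c x := by
    obtain ⟨k, rfl⟩ := Nat.exists_eq_add_of_le hm
    rw [add_nsmul, ← add_assoc]
    exact apply_add_nsmul_eq_of_forall_notMem hf hb₀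
      (fun j => by rw [add_assoc, ← add_nsmul]; exact far₀ x _ (Nat.le_add_right _ _)) k
  have hc_periodic (ρ : G) (hρ : ρ ∈ P) : Function.Periodic c ρ := fun x => by
    set m := max (N x) (N (x + ρ))
    calc c (x + ρ) = f (x + ρ + m • b₀) := (hc_eq _ m (le_max_right _ _)).symm
      _ = f (x + m • b₀ + ρ) := by rw [add_right_comm]
      _ = f (x + m • b₀) := hf _ (far₀ x m (le_max_left _ _)) ρ hρ
      _ = c x := hc_eq x m (le_max_left _ _)
  have eq_of_ray₀ (x : G) (hx : ∀ k : ℕ, x + k • b₀ ∉ T) : f x = c x :=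
    (apply_add_nsmul_eq_of_forall_notMem hf hb₀ hx (N x)).symm
  -- Detour: first along `b₁`, to a point whose `b₀`-ray misses `T`.
  have eq_of_ray₁ (x : G) (hx : ∀ k : ℕ, x + k • b₁ ∉ T) : f x = c x :=
    calc f x = f (x + N x • b₁) := (apply_add_nsmul_eq_of_forall_notMem hf hb₁ hx _).symm
      _ = c (x + N x • b₁) := eq_of_ray₀ _ (far₁₀ x _ le_rfl)
      _ = c x := (hc_periodic b₁ hb₁).nsmul _ x
  refine ⟨c, hc_periodic, eventually_cofinite.2 <|
    (T.finite_toSet.biUnion fun t _ =>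
      (finite_setOf_add_zsmul_add_zsmul_mem hind T t).image fun p => t + p.1 • b₀).subset ?_⟩
  intro x hx
  obtain ⟨k, hk⟩ : ∃ k : ℕ, x + k • b₀ ∈ T := by
    by_contra! h; exact hx (eq_of_ray₀ x h)
  obtain ⟨l, hl⟩ : ∃ l : ℕ, x + l • b₁ ∈ T := by
    by_contra! h; exact hx (eq_of_ray₁ x h)
  exact Set.mem_biUnion hk ⟨(-k, l), by simpa using hl, by simp⟩

end PeriodicOffFinite

theorem Submodule.exists_linearIndependent_pair_of_span_eq_top {K V : Type*} [Field K]
    [AddCommGroup V] [Module K V] {s : Set V} (hs : Submodule.span K s = ⊤)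
    (hV : 1 < Module.finrank K V) : ∃ x ∈ s, ∃ y ∈ s, LinearIndependent K ![x, y] := by
  obtain ⟨x, hxs, hx⟩ : ∃ x ∈ s, x ≠ 0 := by
    by_contra! h
    rw [Submodule.span_eq_bot.2 h, eq_comm] at hs
    have := congrArg (fun W : Submodule K V => Module.finrank K W) hs
    simp only [finrank_top, finrank_bot] at this
    omega
  by_contra! h
  have hsx : Submodule.span K s ≤ K ∙ x := Submodule.span_le.2 fun y hys => by
    obtain ⟨a, rfl⟩ : ∃ a : K, a • x = y := by
      simpa using (LinearIndependent.pair_iff' hx).not.1 (h x hxs y hys)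
    exact Submodule.smul_mem _ a (Submodule.mem_span_singleton_self x)
  rw [hs, top_le_iff] at hsx
  have := congrArg (fun W : Submodule K V => Module.finrank K W) hsx
  simp only [finrank_top, finrank_span_singleton hx] at this
  omega

theorem latpos_zsmul_add_zsmul {d : ℕ} (F : Matrix (Fin d) (Fin d) ℝ) (s t : ℤ) (x y : ZLat d) :
    latpos F (s • x + t • y) = (s : ℝ) • latpos F x + (t : ℝ) • latpos F y := by
  ext i
  simp [latpos, Finset.mul_sum, Finset.sum_add_distrib, mul_add, mul_left_comm]

theorem embedV_add {d n : ℕ} (x y : Vec d) : (embedV (x + y) : Vec n) = embedV x + embedV y := by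
  ext i
  by_cases h : (i : ℕ) < d <;> simp [embedV, h]

theorem embedV_sub {d n : ℕ} (x y : Vec d) : (embedV (x - y) : Vec n) = embedV x - embedV y := by
  ext i
  by_cases h : (i : ℕ) < d <;> simp [embedV, h]

namespace MLSetting

variable {d S n : ℕ} (A : MLSetting d S n)

theorem exists_linearIndependent_pair_mem_R1 :
    ∃ b₀ ∈ A.R1, ∃ b₁ ∈ A.R1, LinearIndependent ℤ ![b₀, b₁] := by
  have hd : 1 < Module.finrank ℝ (Vec d) := by
    rw [finrank_euclideanSpace_fin]; rcases A.hd with rfl | rfl <;> norm_num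
  obtain ⟨_, ⟨ρ₀, hρ₀, rfl⟩, _, ⟨ρ₁, hρ₁, rfl⟩, hind⟩ :=
    Submodule.exists_linearIndependent_pair_of_span_eq_top (A.hR_span A.idx0) hd
  refine ⟨ρ₀, Finset.mem_image_of_mem _ hρ₀, ρ₁, Finset.mem_image_of_mem _ hρ₁,
    LinearIndependent.pair_iff.2 fun s t hst => ?_⟩
  have h := LinearIndependent.pair_iff.1 hind s t (by
    rw [← latpos_zsmul_add_zsmul, hst]
    ext i; simp [latpos])
  exact_mod_cast h

def speciesDiff : (Fin S → Vec n) →L[ℝ] (↥A.R → Vec n) :=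
  ContinuousLinearMap.pi fun e =>
    ContinuousLinearMap.proj (R := ℝ) (φ := fun _ => Vec n) e.1.2.2 -
      ContinuousLinearMap.proj e.1.2.1

@[simp]
theorem speciesDiff_apply (q : Fin S → Vec n) (e : ↥A.R) :
    A.speciesDiff q e = q e.1.2.2 - q e.1.2.1 := rfl

theorem fderiv_cauchyBorn_eq_comp_speciesDiff :
    fderiv ℝ (fun q : Fin S → Vec n =>
        A.Vhom (fun e => embedV (latpos A.F e.1.1) + q e.1.2.2 - q e.1.2.1))
      (fun α => embedV (A.p α)) = (fderiv ℝ A.Vhom A.yvec).comp A.speciesDiff := by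
  set a : ↥A.R → Vec n := fun e => embedV (latpos A.F e.1.1)
  have hfun : (fun q : Fin S → Vec n =>
      A.Vhom (fun e => embedV (latpos A.F e.1.1) + q e.1.2.2 - q e.1.2.1)) =
      A.Vhom ∘ fun q => a + A.speciesDiff q := by
    ext q; simp only [Function.comp_apply]; congr 1; ext e; simp [a, add_sub_assoc]
  have hy : a + A.speciesDiff (fun α => embedV (A.p α)) = A.yvec := by
    ext e; simp [a, yvec, embedV_add, embedV_sub, add_sub_assoc]
  have hV : HasFDerivAt A.Vhom (fderiv ℝ A.Vhom A.yvec)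
      (a + A.speciesDiff fun α => embedV (A.p α)) := by
    rw [hy]; exact ((A.hVhom_smooth.differentiable (by norm_num)) _).hasFDerivAt
  rw [hfun]
  exact (HasFDerivAt.comp (f := fun q => a + A.speciesDiff q) _ hV
    (A.speciesDiff.hasFDerivAt.const_add a)).fderiv

theorem dEhom_zero_eq_speciesDiff_tsum (c : ZLat d → Vec n)
    (hc : ∀ ρ ∈ A.R1, Function.Periodic c ρ) (u : Disp d S n) (hu : (Function.support u).Finite)
    (v : Disp d S n) (hv : ∀ ξ α, v ξ α = c ξ + u ξ α) :
    A.dEhom 0 v = fderiv ℝ A.Vhom A.yvec (A.speciesDiff (∑' ξ, u ξ)) := by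
  have hDv (ξ : ZLat d) : A.Dm v ξ = A.Dm u ξ := by
    ext1 e
    have hρ : e.1.1 ∈ A.R1 := Finset.mem_image_of_mem _ e.2
    simp only [Dm, hv, hc _ hρ ξ, add_sub_add_left_eq_sub]
  have hD0 (ξ : ZLat d) : A.Dm 0 ξ = 0 := by ext1 e; simp [Dm]
  have hu_sum : HasSum u (∑' ξ, u ξ) := (summable_of_hasFiniteSupport hu).hasSum
  have hDu_sum : HasSum (A.Dm u) (A.speciesDiff (∑' ξ, u ξ)) :=
    Pi.hasSum.2 fun e => ((Equiv.addRight e.1.1).hasSum_iff.2 (Pi.hasSum.1 hu_sum _)).sub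
      (Pi.hasSum.1 hu_sum _)
  simp only [dEhom, hD0, add_zero, hDv]
  exact ((fderiv ℝ A.Vhom A.yvec).hasSum hDu_sum).tsum_eq

theorem InU0.exists_periodic_finite_support_sub {v : Disp d S n} (hv : A.InU0 v) :
    ∃ c : ZLat d → Vec n, (∀ ρ ∈ A.R1, Function.Periodic c ρ) ∧
      (Function.support fun ξ α => v ξ α - c ξ).Finite := by
  obtain ⟨T, hT⟩ := hv
  obtain ⟨b₀, hb₀, b₁, hb₁, hind⟩ := A.exists_linearIndependent_pair_mem_R1
  obtain ⟨c, hc, hvc⟩ := exists_periodic_eventuallyEq_cofinite (f := fun ξ => v ξ A.idx0)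
    (fun ξ hξ => (hT ξ hξ).1) hb₀ hb₁ hind
  refine ⟨c, hc, (T.finite_toSet.union (eventually_cofinite.1 hvc)).subset fun ξ hξ => ?_⟩
  by_contra! h
  simp only [Set.mem_union, Finset.mem_coe, Set.mem_ofPred_eq, not_or, not_not] at h
  exact hξ (funext fun α => by simp [(hT ξ h.1).2 α, h.2])

theorem inU0_single (x : Fin S → Vec n) (hx : x A.idx0 = 0) : A.InU0 (Pi.single 0 x) := by
  refine ⟨{0}, fun ξ hξ => ⟨fun ρ _ => ?_, fun α => ?_⟩⟩
  · by_cases h : ξ + ρ = 0 <;> simp [h, hx, Finset.mem_singleton.not.1 hξ]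
  · simp [Finset.mem_singleton.not.1 hξ]

end MLSetting

/-- Lemma: shift equilibrium is equivalent to lattice
equilibrium.  With `G` the (embedded) identity strain and `Ŵ(G,p) =
V̂((Gρ + p_β − p_α)_{(ραβ)∈R})` the Cauchy–Born density, the vanishing of
`∂_p Ŵ(G, p)` at the reference shifts is equivalent to
`Σ_ξ Σ_{(ραβ)∈R} V̂_{,(ραβ)}(Dy(ξ)) · D_{(ραβ)}v(ξ) = 0` for all `v ∈ 𝒰_0`. -/
theorem shift_equilibrium_iff_lattice_equilibrium {d S n : ℕ}
    (A : MLSetting d S n) :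
    (fderiv ℝ
        (fun q : Fin S → Vec n =>
          A.Vhom (fun e => embedV (latpos A.F e.1.1) + q e.1.2.2 - q e.1.2.1))
        (fun α => embedV (A.p α)) = 0)
      ↔ (∀ v : Disp d S n, A.InU0 v → A.dEhom 0 v = 0) := by
  rw [A.fderiv_cauchyBorn_eq_comp_speciesDiff, ContinuousLinearMap.ext_iff]
  simp only [ContinuousLinearMap.comp_apply, zero_apply]
  constructor
  · intro hW v hv
    obtain ⟨c, hc, hu⟩ := hv.exists_periodic_finite_support_sub
    rw [A.dEhom_zero_eq_speciesDiff_tsum c hc _ hu v fun ξ α => (add_sub_cancel _ _).symm]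
    exact hW _
  · intro hE w
    set x : Fin S → Vec n := fun α => w α - w A.idx0
    have h := hE _ (A.inU0_single x (sub_self _))
    rw [A.dEhom_zero_eq_speciesDiff_tsum 0 (fun _ _ _ => rfl) _
      ((Set.finite_singleton 0).subset Pi.support_single_subset) _
      fun ξ α => (zero_add _).symm, tsum_pi_single] at h
    have hx : A.speciesDiff x = A.speciesDiff w := by ext e; simp [x]
    rwa [hx] at h
end
end

section
/- Let Ω = (−1/2, 1/2]^d, N ∈ ℕ, ε = 1/N, Ω_ε = {−1/2+ε, …, 1/2}^d. For periodic fields Z ∈ C³(Ω, ℝ^n) and q_α ∈ C²(Ω, ℝ^n), define z^ε_α(ξ) = Z(ξ) + ε q_α(ξ) for ξ ∈ Ω_ε. Then ⟨δ²E^a_ε(0) z^ε, z^ε⟩ − ⟨δ²E^c_Ω(0)(Z, q), (Z, q)⟩ → 0 as ε → 0, where E^a_ε(u^ε) = ε^d Σ_{ξ∈Ω_ε} V_ξ(D^ε u^ε(ξ)) with D^ε_{(ραβ)}u^ε(ξ) = (u^ε_β(ξ+ερ) − u^ε_α(ξ))/ε (interpreted periodically), and E^c_Ω(U, p) = ∫_Ω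 V((∇_ρ U(x) + p_β(x) − p_α(x))_{(ραβ)∈R}) dx. -/
open scoped BigOperators
noncomputable section

namespace MLSetting

variable {d S n : ℕ} (A : MLSetting d S n)

/-- The Cauchy–Born strain `((∇U)ρ + p_β − p_α)_{(ραβ)∈R}` at the point `x`. -/
def cbStrain (Z : Vec d → Vec n) (q : Fin S → Vec d → Vec n) (x : Vec d) :
    ↥A.R → Vec n :=
  fun e => fderiv ℝ Z x (latpos A.F e.1.1) + q e.1.2.2 x - q e.1.2.1 x

/-- The scaled finite differences
`D^ε_{(ραβ)} u^ε(x) = (u^ε_β(x + ερ) − u^ε_α(x))/ε`, `ε = 1/N`, of the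
atomistic fields `u^ε_α = U + ε q_α` obtained from continuum fields. -/
def Deps (N : ℕ) (U : Vec d → Vec n) (q : Fin S → Vec d → Vec n) (x : Vec d) :
    ↥A.R → Vec n :=
  fun e =>
    (N : ℝ) •
      ((U (x + (N : ℝ)⁻¹ • latpos A.F e.1.1)
          + (N : ℝ)⁻¹ • q e.1.2.2 (x + (N : ℝ)⁻¹ • latpos A.F e.1.1))
        - (U x + (N : ℝ)⁻¹ • q e.1.2.1 x))

end MLSetting

/-- The index set of the scaled atomistic domain
`Ω_ε = {-1/2+ε, …, 1/2}^d`, `ε = 1/N`. -/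
def gridSet (d : ℕ) (N : ℕ) : Finset (ZLat d) :=
  Finset.Icc (fun _ => 1) (fun _ => (N : ℤ))

/-- The point `(-1/2 + ε z_1, …, -1/2 + ε z_d)` of `Ω_ε`, `ε = 1/N`. -/
def gridPt {d : ℕ} (N : ℕ) (z : ZLat d) : Vec d :=
  WithLp.toLp 2 fun i => -(1 / 2 : ℝ) + (z i : ℝ) / (N : ℝ)

/-- The continuum domain `Ω = (-1/2, 1/2]^d`. -/
def cubeΩ (d : ℕ) : Set (Vec d) :=
  {x : Vec d | ∀ i, x i ∈ Set.Ioc (-(1 / 2 : ℝ)) (1 / 2 : ℝ)}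

/-- The integer vector `m` as an element of `ℝ^d`. -/
def intVec {d : ℕ} (m : ZLat d) : Vec d := WithLp.toLp 2 fun i => (m i : ℝ)

/-- `1`-periodicity (in each coordinate) of a continuum field. -/
def ZPeriodic {d n : ℕ} (U : Vec d → Vec n) : Prop :=
  ∀ (x : Vec d) (m : ZLat d), U (x + intVec m) = U x

namespace MLSetting

variable {d S n : ℕ} (A : MLSetting d S n)

/-- The scaled atomistic energy
`E^a_ε(u^ε) = ε^d Σ_{ξ∈Ω_ε} V_ξ(D^ε u^ε(ξ))`, `ε = 1/N`, evaluated on the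
atomistic fields `u^ε_α = U + ε q_α`. -/
def Eaeps (N : ℕ) (U : Vec d → Vec n) (q : Fin S → Vec d → Vec n) : ℝ :=
  ((N : ℝ)⁻¹) ^ d *
    ∑ z ∈ gridSet d N,
      (A.Vsite z (A.yvec + A.Deps N U q (gridPt N z)) - A.Vhom A.yvec)

/-- The Cauchy–Born energy on `Ω`:
`E^c_Ω(U,p) = ∫_Ω V((∇_ρ U + p_β − p_α)_{(ραβ)∈R}) dx`. -/
def EcΩ (U : Vec d → Vec n) (q : Fin S → Vec d → Vec n) : ℝ :=
  ∫ x in cubeΩ d, (A.Vhom (A.yvec + A.cbStrain U q x) - A.Vhom A.yvec)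

/-- The second variation `⟨δ²E^a_ε(0) z^ε, z^ε⟩` of the scaled atomistic
energy at the reference state, on the fields `z^ε_α = Z + ε q_α`. -/
def d2Eaeps (N : ℕ) (Z : Vec d → Vec n) (q : Fin S → Vec d → Vec n) : ℝ :=
  ((N : ℝ)⁻¹) ^ d *
    ∑ z ∈ gridSet d N,
      iteratedFDeriv ℝ 2 (A.Vsite z) A.yvec
        ![A.Deps N Z q (gridPt N z), A.Deps N Z q (gridPt N z)]

/-- The second variation `⟨δ²E^c_Ω(0)(Z,q), (Z,q)⟩` of the Cauchy–Born
energy on `Ω` at the reference state. -/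
def d2EcΩ (Z : Vec d → Vec n) (q : Fin S → Vec d → Vec n) : ℝ :=
  ∫ x in cubeΩ d,
    iteratedFDeriv ℝ 2 A.Vhom A.yvec ![A.cbStrain Z q x, A.cbStrain Z q x]

end MLSetting

/-!
Away from the finitely many defect sites the site Hessians `δ²V̂_ξ(Dy)` coincide with the
homogeneous one. The scaled differences `D^ε z^ε` converge to the Cauchy–Born strain uniformly on
compact sets (a difference quotient of the `C¹` field `Z` plus a vanishing shift of the `q_α`),
so they stay bounded and the defect sites contribute only `O(ε^d)`. What remains is a Riemann sum
over `Ω_ε` of functions converging uniformly to the continuous integrand of `δ²E^c_Ω`, and such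
Riemann sums converge to the integral over `Ω`.
-/

open Filter Topology Metric MeasureTheory Set

section UniformConvergence

variable {ι α β γ : Type*}

theorem IsCompact.exists_forall_dist_lt_of_continuousAt [PseudoMetricSpace α]
    [PseudoMetricSpace β] {K : Set α} {f : α → β} (hK : IsCompact K)
    (hf : ∀ x ∈ K, ContinuousAt f x) {ε : ℝ} (hε : 0 < ε) :
    ∃ δ > 0, ∀ x ∈ K, ∀ y, dist x y < δ → dist (f x) (f y) < ε := by
  obtain ⟨δ, hδ, h⟩ := Metric.mem_uniformity_dist.1
    (hK.uniformContinuousAt_of_continuousAt f hf (dist_mem_uniformity hε))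
  exact ⟨δ, hδ, fun x hx y hxy => h hxy hx⟩

theorem Continuous.comp_tendstoUniformlyOn_of_isCompact [UniformSpace β] [UniformSpace γ]
    {p : Filter ι} {s : Set α} {F : ι → α → β} {f : α → β} {g : β → γ} (hg : Continuous g)
    (hf : IsCompact (f '' s)) (h : TendstoUniformlyOn F f p s) :
    TendstoUniformlyOn (fun i x => g (F i x)) (fun x => g (f x)) p s := fun _ hu =>
  (h _ (hf.uniformContinuousAt_of_continuousAt g (fun _ _ => hg.continuousAt) hu)).mono
    fun _ hi x hx => hi x hx (Set.mem_image_of_mem f hx)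

theorem tendstoUniformlyOn_pi_of_forall [Fintype ι] {β : ι → Type*}
    [∀ j, PseudoMetricSpace (β j)] {p : Filter γ} {s : Set α} {F : γ → α → ∀ j, β j}
    {f : α → ∀ j, β j} (h : ∀ j, TendstoUniformlyOn (fun i x => F i x j) (fun x => f x j) p s) :
    TendstoUniformlyOn F f p s := by
  rw [Metric.tendstoUniformlyOn_iff]
  intro ε hε
  filter_upwards [eventually_all.2 fun j => Metric.tendstoUniformlyOn_iff.1 (h j) ε hε]
    with i hi x hx
  exact (dist_pi_lt_iff hε).2 fun j => hi j x hx

end UniformConvergence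

section DifferenceQuotients

variable {ι E F : Type*} [NormedAddCommGroup E] [NormedAddCommGroup F] {l : Filter ι} {K : Set E}

theorem Continuous.tendstoUniformlyOn_comp_add {f : E → F} (hf : Continuous f) (hK : IsCompact K)
    {h : ι → E} (hh : Tendsto h l (𝓝 0)) :
    TendstoUniformlyOn (fun i x => f (x + h i)) f l K := by
  refine hf.comp_tendstoUniformlyOn_of_isCompact (f := id) (by simpa using hK) ?_
  rw [Metric.tendstoUniformlyOn_iff]
  intro ε hε
  filter_upwards [hh (ball_mem_nhds 0 hε)] with i hi x _
  simpa [dist_eq_norm] using hi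

theorem ContDiff.tendstoUniformlyOn_differenceQuotient [NormedSpace ℝ E] [NormedSpace ℝ F]
    {f : E → F} (hf : ContDiff ℝ 1 f) (hK : IsCompact K) (v : E) {t : ι → ℝ}
    (ht : Tendsto t l (𝓝[≠] 0)) :
    TendstoUniformlyOn (fun i x => (t i)⁻¹ • (f (x + t i • v) - f x))
      (fun x => fderiv ℝ f x v) l K := by
  rw [Metric.tendstoUniformlyOn_iff]
  intro ε hε
  have hε' : 0 < ε / (‖v‖ + 1) := by positivity
  obtain ⟨δ, hδ, hf'⟩ := hK.exists_forall_dist_lt_of_continuousAt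
    (fun x _ => (hf.continuous_fderiv one_ne_zero).continuousAt) hε'
  have hshift : Tendsto (fun i => t i • v) l (𝓝 0) := by
    simpa using (tendsto_nhds_of_tendsto_nhdsWithin ht).smul_const v
  filter_upwards [hshift (ball_mem_nhds 0 hδ), ht self_mem_nhdsWithin] with i hi hti x hx
  have hti : t i ≠ 0 := hti
  have hmvt : ‖f (x + t i • v) - f x - fderiv ℝ f x (t i • v)‖ ≤ ε / (‖v‖ + 1) * ‖t i • v‖ := by
    have := (convex_ball x δ).norm_image_sub_le_of_norm_fderiv_le'
      (fun y _ => (hf.differentiable one_ne_zero) y)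
      (fun y hy => by rw [← dist_eq_norm, dist_comm]; exact (hf' x hx y (mem_ball'.1 hy)).le)
      (mem_ball_self hδ) (y := x + t i • v) (by simpa [dist_eq_norm] using hi)
    simpa using this
  have hdiff : fderiv ℝ f x v - (t i)⁻¹ • (f (x + t i • v) - f x)
      = -((t i)⁻¹ • (f (x + t i • v) - f x - fderiv ℝ f x (t i • v))) := by
    simp only [map_smul, smul_sub, smul_smul, inv_mul_cancel₀ hti, one_smul]
    abel
  rw [norm_smul] at hmvt
  rw [dist_eq_norm, hdiff, norm_neg, norm_smul, norm_inv]
  calc ‖t i‖⁻¹ * ‖f (x + t i • v) - f x - fderiv ℝ f x (t i • v)‖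
      ≤ ‖t i‖⁻¹ * (ε / (‖v‖ + 1) * (‖t i‖ * ‖v‖)) := by gcongr
    _ = ε / (‖v‖ + 1) * ‖v‖ := by field_simp
    _ < ε := by
      rw [div_mul_eq_mul_div, div_lt_iff₀ (by positivity)]
      nlinarith [norm_nonneg v]

end DifferenceQuotients

theorem TendstoUniformlyOn.eventually_forall_norm_le {ι α E : Type*} [SeminormedAddCommGroup E]
    {p : Filter ι} {s : Set α} {F : ι → α → E} {f : α → E} (h : TendstoUniformlyOn F f p s)
    {B : ℝ} (hB : ∀ x ∈ s, ‖f x‖ ≤ B) : ∀ᶠ i in p, ∀ x ∈ s, ‖F i x‖ ≤ B + 1 := by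
  filter_upwards [Metric.tendstoUniformlyOn_iff.1 h 1 one_pos] with i hi x hx
  have := hi x hx
  rw [dist_eq_norm] at this
  linarith [norm_le_insert' (F i x) (f x), norm_sub_rev (F i x) (f x), hB x hx]

theorem Finset.abs_sum_le_card_mul_of_eq_zero {ι : Type*} {s D : Finset ι} {f : ι → ℝ} {M : ℝ}
    (hM : 0 ≤ M) (hD : ∀ z ∈ s, z ∉ D → f z = 0) (hf : ∀ z ∈ s, |f z| ≤ M) :
    |∑ z ∈ s, f z| ≤ D.card * M := by
  classical
  rw [← Finset.sum_filter_of_ne (p := fun z => z ∈ D)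
    fun z hz h0 => by_contra fun h => h0 (hD z hz h)]
  calc _ ≤ ∑ z ∈ s with z ∈ D, |f z| := Finset.abs_sum_le_sum_abs _ _
    _ ≤ (s.filter fun z => z ∈ D).card • M :=
      Finset.sum_le_card_nsmul _ _ _ fun z hz => hf z (Finset.mem_filter.1 hz).1
    _ ≤ D.card * M := by
      have hsub : (s.filter fun z => z ∈ D) ⊆ D := fun z hz => (Finset.mem_filter.1 hz).2
      rw [nsmul_eq_mul]
      exact mul_le_mul_of_nonneg_right (by exact_mod_cast Finset.card_le_card hsub) hM

theorem ContinuousMultilinearMap.norm_apply_vecCons_self_le {X G : Type*}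
    [NormedAddCommGroup X] [NormedSpace ℝ X] [NormedAddCommGroup G] [NormedSpace ℝ G]
    (m : ContinuousMultilinearMap ℝ (fun _ : Fin 2 => X) G) (g : X) :
    ‖m ![g, g]‖ ≤ ‖m‖ * ‖g‖ ^ 2 := by
  simpa [Fin.prod_univ_two, sq] using m.le_opNorm ![g, g]

theorem finite_setOf_norm_latpos_lt {d : ℕ} {F : Matrix (Fin d) (Fin d) ℝ} (hF : IsUnit F.det)
    (r : ℝ) : {z : ZLat d | ‖latpos F z‖ < r}.Finite := by
  set C := ‖Matrix.toEuclideanCLM (𝕜 := ℝ) F⁻¹‖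
  have hinv : ∀ z, intVec z = Matrix.toEuclideanCLM (𝕜 := ℝ) F⁻¹ (latpos F z) := fun z => by
    rw [show latpos F z = WithLp.toLp 2 (F.mulVec fun j => (z j : ℝ)) from rfl,
      Matrix.toEuclideanCLM_toLp, Matrix.mulVec_mulVec, Matrix.nonsing_inv_mul F hF,
      Matrix.one_mulVec]
    rfl
  refine ((isCompact_closedBall (0 : ZLat d) (C * r)).finite_of_discrete).subset fun z hz => ?_
  have hz' : ‖intVec z‖ ≤ C * r := (hinv z ▸ (Matrix.toEuclideanCLM (𝕜 := ℝ) F⁻¹).le_opNorm _).trans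
    (mul_le_mul_of_nonneg_left (le_of_lt hz) (norm_nonneg _))
  rw [mem_closedBall_zero_iff, pi_norm_le_iff_of_nonneg ((norm_nonneg _).trans hz')]
  intro i
  rw [← Int.norm_cast_real]
  exact (PiLp.norm_apply_le (intVec z) i).trans hz'

section RiemannSums

variable {d : ℕ}

theorem EuclideanSpace.norm_le_sqrt_card_mul {ι : Type*} [Fintype ι] {x : EuclideanSpace ℝ ι}
    {c : ℝ} (hc : 0 ≤ c) (hx : ∀ i, |x i| ≤ c) : ‖x‖ ≤ √(Fintype.card ι) * c := by
  rw [EuclideanSpace.norm_eq, ← Real.sqrt_sq hc, ← Real.sqrt_mul (Nat.cast_nonneg _)]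
  refine Real.sqrt_le_sqrt ?_
  calc ∑ i, ‖x i‖ ^ 2 ≤ ∑ _i : ι, c ^ 2 := Finset.sum_le_sum fun i _ => by
        simpa [sq_abs] using pow_le_pow_left₀ (abs_nonneg _) (hx i) 2
    _ = Fintype.card ι * c ^ 2 := by simp

theorem cubeΩ_subset_closedBall : cubeΩ d ⊆ closedBall 0 √d := fun x hx => by
  rw [mem_closedBall_zero_iff, ← mul_one √d]
  simpa using EuclideanSpace.norm_le_sqrt_card_mul (x := x) zero_le_one fun i => abs_le.2
    ⟨by linarith [(hx i).1], by linarith [(hx i).2]⟩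

def riemannSum (N : ℕ) (f : Vec d → ℝ) : ℝ :=
  ((N : ℝ)⁻¹) ^ d * ∑ z ∈ gridSet d N, f (gridPt N z)

def gridCell (N : ℕ) (z : ZLat d) : Set (Vec d) :=
  {x | ∀ i, x i ∈ Ioc (gridPt N z i - (N : ℝ)⁻¹) (gridPt N z i)}

theorem mem_gridCell_iff {N : ℕ} (hN : 0 < N) {z : ZLat d} {x : Vec d} :
    x ∈ gridCell N z ↔ ∀ i, ⌈(N : ℝ) * (x i + 1 / 2)⌉ = z i := by
  simp only [gridCell, mem_ofPred_eq]
  have hN' : (0 : ℝ) < N := Nat.cast_pos.2 hN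
  refine forall_congr' fun i => ?_
  have hlow : gridPt N z i - (N : ℝ)⁻¹ = ((z i : ℝ) - 1) / N - 1 / 2 := by
    simp only [gridPt, PiLp.toLp_apply]; ring
  have hup : gridPt N z i = (z i : ℝ) / N - 1 / 2 := by
    simp only [gridPt, PiLp.toLp_apply]; ring
  rw [mem_Ioc, hlow, hup, sub_lt_iff_lt_add, le_sub_iff_add_le, div_lt_iff₀ hN',
    le_div_iff₀ hN', Int.ceil_eq_iff, mul_comm (N : ℝ)]

theorem mem_gridSet_iff {N : ℕ} {z : ZLat d} : z ∈ gridSet d N ↔ ∀ i, 1 ≤ z i ∧ z i ≤ N := by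
  simp only [gridSet, Finset.mem_Icc, Pi.le_def, forall_and]

theorem card_gridSet (N : ℕ) : (gridSet d N).card = N ^ d := by
  simp [gridSet, Pi.card_Icc, Int.card_Icc]

theorem gridPt_mem_gridCell {N : ℕ} (hN : 0 < N) (z : ZLat d) : gridPt N z ∈ gridCell N z :=
  fun _ => ⟨sub_lt_self _ (by positivity), le_rfl⟩

theorem norm_sub_gridPt_le {N : ℕ} {z : ZLat d} {x : Vec d} (hx : x ∈ gridCell N z) :
    ‖x - gridPt N z‖ ≤ √d * (N : ℝ)⁻¹ := by
  simpa using EuclideanSpace.norm_le_sqrt_card_mul (x := x - gridPt N z) (by positivity) fun i => by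
    rw [PiLp.sub_apply, abs_le]
    have hN : (0 : ℝ) ≤ (N : ℝ)⁻¹ := by positivity
    exact ⟨by linarith [(hx i).1], by linarith [(hx i).2]⟩

theorem gridCell_subset_cubeΩ {N : ℕ} {z : ZLat d} (hz : z ∈ gridSet d N) :
    gridCell N z ⊆ cubeΩ d := by
  intro x hx i
  obtain ⟨hz1, hzN⟩ := mem_gridSet_iff.1 hz i
  have hz1' : (1 : ℝ) ≤ z i := by exact_mod_cast hz1
  have hzN' : (z i : ℝ) ≤ N := by exact_mod_cast hzN
  have hlow : gridPt N z i - (N : ℝ)⁻¹ = -(1 / 2) + ((z i : ℝ) - 1) / N := by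
    simp only [gridPt, PiLp.toLp_apply]; ring
  have h1 : 0 ≤ ((z i : ℝ) - 1) / N := div_nonneg (by linarith) (Nat.cast_nonneg N)
  have h2 : (z i : ℝ) / N ≤ 1 := div_le_one_of_le₀ hzN' (Nat.cast_nonneg N)
  have hx1 := (hx i).1
  have hx2 : x i ≤ -(1 / 2) + (z i : ℝ) / N := (hx i).2
  rw [hlow] at hx1
  exact ⟨by linarith, by linarith⟩

theorem gridPt_mem_cubeΩ {N : ℕ} (hN : 0 < N) {z : ZLat d} (hz : z ∈ gridSet d N) :
    gridPt N z ∈ cubeΩ d :=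
  gridCell_subset_cubeΩ hz (gridPt_mem_gridCell hN z)

theorem cubeΩ_eq_biUnion_gridCell {N : ℕ} (hN : 0 < N) :
    cubeΩ d = ⋃ z ∈ gridSet d N, gridCell N z := by
  refine (Set.iUnion₂_subset fun z hz => gridCell_subset_cubeΩ hz).antisymm' fun x hx => ?_
  have hN' : (0 : ℝ) < N := Nat.cast_pos.2 hN
  refine Set.mem_biUnion (x := fun i => ⌈(N : ℝ) * (x i + 1 / 2)⌉) ?_
    ((mem_gridCell_iff hN).2 fun i => rfl)
  refine mem_gridSet_iff.2 fun i => ⟨Int.one_le_ceil_iff.2 ?_, Int.ceil_le.2 ?_⟩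
  · exact mul_pos hN' (by linarith [(hx i).1])
  · push_cast
    nlinarith [(hx i).2]

theorem pairwise_disjoint_gridCell {N : ℕ} (hN : 0 < N) (s : Set (ZLat d)) :
    s.Pairwise (Function.onFun Disjoint (gridCell (d := d) N)) := by
  intro z _ z' _ hzz'
  refine Set.disjoint_left.2 fun x hx hx' => hzz' (funext fun i => ?_)
  rw [← (mem_gridCell_iff hN).1 hx i, ← (mem_gridCell_iff hN).1 hx' i]

theorem gridCell_eq_preimage (N : ℕ) (z : ZLat d) :
    gridCell N z = (MeasurableEquiv.toLp 2 (Fin d → ℝ)).symm ⁻¹'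
      univ.pi fun i => Ioc (gridPt N z i - (N : ℝ)⁻¹) (gridPt N z i) := by
  ext x
  simp [gridCell]

theorem measurableSet_gridCell (N : ℕ) (z : ZLat d) : MeasurableSet (gridCell N z) := by
  rw [gridCell_eq_preimage]
  exact (MeasurableEquiv.measurable _) (MeasurableSet.univ_pi fun _ => measurableSet_Ioc)

theorem volume_gridCell (N : ℕ) (z : ZLat d) :
    volume (gridCell N z) = ENNReal.ofReal ((N : ℝ)⁻¹) ^ d := by
  rw [gridCell_eq_preimage, (EuclideanSpace.volume_preserving_symm_measurableEquiv_toLp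
    (Fin d)).measure_preimage (MeasurableSet.univ_pi fun _ => measurableSet_Ioc).nullMeasurableSet,
    volume_pi_pi]
  simp

theorem measureReal_gridCell (N : ℕ) (z : ZLat d) :
    volume.real (gridCell N z) = ((N : ℝ)⁻¹) ^ d := by
  rw [measureReal_def, volume_gridCell, ENNReal.toReal_pow, ENNReal.toReal_ofReal (by positivity)]

theorem abs_riemannSum_sub_setIntegral_le {N : ℕ} (hN : 0 < N) {f G : Vec d → ℝ}
    (hG : IntegrableOn G (cubeΩ d)) {δ : ℝ}
    (h : ∀ z ∈ gridSet d N, ∀ x ∈ gridCell N z, |f (gridPt N z) - G x| ≤ δ) :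
    |riemannSum N f - ∫ x in cubeΩ d, G x| ≤ δ := by
  have hfin : ∀ z : ZLat d, volume (gridCell N z) < ⊤ := fun z => by
    simp [volume_gridCell]
  have hcell : ∀ z ∈ gridSet d N,
      |((N : ℝ)⁻¹) ^ d * f (gridPt N z) - ∫ x in gridCell N z, G x| ≤ δ * ((N : ℝ)⁻¹) ^ d := by
    intro z hz
    have hGz : IntegrableOn G (gridCell N z) := hG.mono_set (gridCell_subset_cubeΩ hz)
    rw [← measureReal_gridCell N z, ← smul_eq_mul, ← setIntegral_const,
      ← integral_sub (integrableOn_const (C := f (gridPt N z)) (hfin z).ne) hGz]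
    exact norm_setIntegral_le_of_norm_le_const (hfin z) fun x hx =>
      (Real.norm_eq_abs _).trans_le (h z hz x hx)
  rw [cubeΩ_eq_biUnion_gridCell hN, integral_biUnion_finset _
    (fun z _ => measurableSet_gridCell N z) (pairwise_disjoint_gridCell hN _)
    (fun z hz => hG.mono_set (gridCell_subset_cubeΩ hz)), riemannSum, Finset.mul_sum,
    ← Finset.sum_sub_distrib]
  calc _ ≤ ∑ z ∈ gridSet d N, |((N : ℝ)⁻¹) ^ d * f (gridPt N z) - ∫ x in gridCell N z, G x| :=
        Finset.abs_sum_le_sum_abs _ _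
    _ ≤ (gridSet d N).card • (δ * ((N : ℝ)⁻¹) ^ d) := Finset.sum_le_card_nsmul _ _ _ hcell
    _ = δ := by
      rw [card_gridSet, nsmul_eq_mul, Nat.cast_pow, mul_left_comm, ← mul_pow,
        mul_inv_cancel₀ (Nat.cast_pos.2 hN).ne', one_pow, mul_one]

theorem tendsto_riemannSum_of_tendstoUniformlyOn {f : ℕ → Vec d → ℝ} {G : Vec d → ℝ}
    (hG : Continuous G) (hf : TendstoUniformlyOn f G atTop (cubeΩ d)) :
    Tendsto (fun N => riemannSum N (f N)) atTop (𝓝 (∫ x in cubeΩ d, G x)) := by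
  have hK : IsCompact (closedBall (0 : Vec d) √d) := isCompact_closedBall 0 √d
  have hGint : IntegrableOn G (cubeΩ d) :=
    (hG.continuousOn.integrableOn_compact hK).mono_set cubeΩ_subset_closedBall
  have hmesh : Tendsto (fun N : ℕ => √d * (N : ℝ)⁻¹) atTop (𝓝 0) := by
    simpa using tendsto_inv_atTop_nhds_zero_nat.const_mul √d
  rw [Metric.tendsto_nhds]
  intro ε hε
  obtain ⟨δ, hδ, hGδ⟩ := hK.exists_forall_dist_lt_of_continuousAt
    (fun x _ => hG.continuousAt) (by positivity : 0 < ε / 4)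
  filter_upwards [Metric.tendstoUniformlyOn_iff.1 hf (ε / 4) (by positivity),
    hmesh.eventually (gt_mem_nhds hδ), eventually_gt_atTop 0] with N hfN hNδ hN
  refine (abs_riemannSum_sub_setIntegral_le hN hGint fun z hz x hx => ?_).trans_lt
    (by linarith : ε / 2 < ε)
  have hgp := gridPt_mem_cubeΩ hN hz
  have h1 := hfN _ hgp
  have h2 := hGδ _ (cubeΩ_subset_closedBall hgp) x
    (by rw [dist_comm, dist_eq_norm]; exact (norm_sub_gridPt_le hx).trans_lt hNδ)
  rw [Real.dist_eq] at h1 h2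
  calc |f N (gridPt N z) - G x| ≤ |G (gridPt N z) - f N (gridPt N z)| + |G (gridPt N z) - G x| := by
        rw [abs_sub_comm (G _)]; exact abs_sub_le _ _ _
    _ ≤ ε / 2 := by linarith

end RiemannSums

namespace MLSetting

variable {d S n : ℕ} (A : MLSetting d S n)

theorem finite_defects : {z : ZLat d | A.Vsite z ≠ A.Vhom}.Finite :=
  (finite_setOf_norm_latpos_lt (by rw [A.hdetF]; exact isUnit_one) A.Rdef).subset
    fun z hz => not_le.1 fun h => hz (A.hVsite_hom z h)

def hessForm (V : (↥A.R → Vec n) → ℝ) (g : ↥A.R → Vec n) : ℝ :=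
  iteratedFDeriv ℝ 2 V A.yvec ![g, g]

theorem continuous_hessForm (V : (↥A.R → Vec n) → ℝ) : Continuous (A.hessForm V) := by
  unfold hessForm
  fun_prop

variable {Z : Vec d → Vec n} {q : Fin S → Vec d → Vec n}

theorem continuous_cbStrain (hZ : ContDiff ℝ 1 Z) (hq : ∀ α, Continuous (q α)) :
    Continuous (A.cbStrain Z q) :=
  continuous_pi fun _ =>
    (((hZ.continuous_fderiv one_ne_zero).clm_apply continuous_const).add (hq _)).sub (hq _)

theorem tendstoUniformlyOn_Deps {K : Set (Vec d)} (hZ : ContDiff ℝ 1 Z)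
    (hq : ∀ α, Continuous (q α)) (hK : IsCompact K) :
    TendstoUniformlyOn (fun N => A.Deps N Z q) (A.cbStrain Z q) atTop K := by
  have ht : Tendsto (fun N : ℕ => (N : ℝ)⁻¹) atTop (𝓝[≠] 0) :=
    tendsto_nhdsWithin_iff.2 ⟨tendsto_inv_atTop_nhds_zero_nat,
      (eventually_ne_atTop 0).mono fun N hN => by simpa using hN⟩
  refine tendstoUniformlyOn_pi_of_forall fun e => ?_
  set ρ := latpos A.F e.1.1
  have hshift : Tendsto (fun N : ℕ => (N : ℝ)⁻¹ • ρ) atTop (𝓝 0) := by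
    simpa using (tendsto_nhds_of_tendsto_nhdsWithin ht).smul_const ρ
  have hconst : TendstoUniformlyOn (fun (_ : ℕ) x => q e.1.2.1 x) (q e.1.2.1) atTop K :=
    fun _ hu => Eventually.of_forall fun _ _ _ => refl_mem_uniformity hu
  refine (((hZ.tendstoUniformlyOn_differenceQuotient hK ρ ht).fun_add
    ((hq e.1.2.2).tendstoUniformlyOn_comp_add hK hshift)).fun_sub hconst).congr ?_ |>.congr_right ?_
  · -- for `N ≠ 0`, `Deps` is a difference quotient of `Z` plus `q_β(x + ρ/N) - q_α(x)`
    filter_upwards [eventually_ne_atTop 0] with N hN x _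
    have hN : (N : ℝ) ≠ 0 := Nat.cast_ne_zero.2 hN
    simp only [Deps, inv_inv, smul_sub, smul_add, smul_smul, mul_inv_cancel₀ hN, one_smul]
    abel
  · intro x _
    simp only [cbStrain, add_sub_assoc, ρ]

theorem tendsto_d2Eaeps_sub_riemannSum (hd : d ≠ 0) {B : ℝ}
    (hB : ∀ᶠ N in atTop, ∀ x ∈ cubeΩ d, ‖A.Deps N Z q x‖ ≤ B) :
    Tendsto (fun N => A.d2Eaeps N Z q - riemannSum N (A.hessForm A.Vhom ∘ A.Deps N Z q))
      atTop (𝓝 0) := by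
  obtain ⟨D, hD⟩ := A.finite_defects.exists_finset
  obtain ⟨Cs, hCs⟩ := A.hV_bdd
  obtain ⟨Ch, hCh⟩ := A.hVhom_bdd
  set M := (Cs + Ch) * B ^ 2
  have hM : 0 ≤ M := mul_nonneg (add_nonneg ((norm_nonneg _).trans (hCs 0 0 0 (Nat.zero_le _)))
    ((norm_nonneg _).trans (hCh 0 0 (Nat.zero_le _)))) (sq_nonneg B)
  have hlim : Tendsto (fun N : ℕ => ((N : ℝ)⁻¹) ^ d * (D.card * M)) atTop (𝓝 0) := by
    simpa [zero_pow hd] using (tendsto_inv_atTop_nhds_zero_nat.pow d).mul_const (D.card * M)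
  refine squeeze_zero_norm' ?_ hlim
  filter_upwards [hB, eventually_gt_atTop 0] with N hBN hN
  rw [d2Eaeps, riemannSum, ← mul_sub, ← Finset.sum_sub_distrib, norm_mul, norm_pow, norm_inv,
    Real.norm_natCast, Real.norm_eq_abs]
  refine mul_le_mul_of_nonneg_left (Finset.abs_sum_le_card_mul_of_eq_zero hM ?_ ?_) (by positivity)
  · intro z _ hz
    rw [not_not.1 fun h => hz ((hD z).2 h)]
    exact sub_self _
  · intro z hz
    have hg := hBN _ (gridPt_mem_cubeΩ hN hz)
    have hform : ∀ V : (↥A.R → Vec n) → ℝ, ∀ C, ‖iteratedFDeriv ℝ 2 V A.yvec‖ ≤ C →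
        |A.hessForm V (A.Deps N Z q (gridPt N z))| ≤ C * B ^ 2 := fun V C hV =>
      ((iteratedFDeriv ℝ 2 V A.yvec).norm_apply_vecCons_self_le _).trans
        (by gcongr; exact (norm_nonneg _).trans hV)
    calc _ ≤ |A.hessForm (A.Vsite z) (A.Deps N Z q (gridPt N z))|
          + |A.hessForm A.Vhom (A.Deps N Z q (gridPt N z))| := abs_sub _ _
      _ ≤ Cs * B ^ 2 + Ch * B ^ 2 :=
        add_le_add (hform _ _ (hCs z _ 2 (by norm_num))) (hform _ _ (hCh _ 2 (by norm_num)))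
      _ = M := by ring

end MLSetting

theorem cauchy_born_hessian_convergence_general {d S n : ℕ} (A : MLSetting d S n)
    (Z : Vec d → Vec n) (q : Fin S → Vec d → Vec n)
    (hZ : ContDiff ℝ 3 Z) (hq : ∀ α, ContDiff ℝ 2 (q α)) :
    Filter.Tendsto (fun N : ℕ => A.d2Eaeps (N + 1) Z q - A.d2EcΩ Z q)
      Filter.atTop (nhds 0) := by
  have hd : d ≠ 0 := by rcases A.hd with h | h <;> omega
  have hZ1 : ContDiff ℝ 1 Z := hZ.of_le (by norm_num)
  have hq0 : ∀ α, Continuous (q α) := fun α => (hq α).continuous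
  have hK : IsCompact (closedBall (0 : Vec d) √d) := isCompact_closedBall 0 √d
  have hcb := A.continuous_cbStrain hZ1 hq0
  have hstrain := A.tendstoUniformlyOn_Deps hZ1 hq0 hK
  obtain ⟨B, hB⟩ := hK.exists_bound_of_continuousOn hcb.continuousOn
  have hdefect := A.tendsto_d2Eaeps_sub_riemannSum hd
    ((hstrain.mono cubeΩ_subset_closedBall).eventually_forall_norm_le
      fun x hx => hB x (cubeΩ_subset_closedBall hx))
  have hhess := A.continuous_hessForm A.Vhom
  have hriemann := tendsto_riemannSum_of_tendstoUniformlyOn (hhess.comp hcb)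
    ((hhess.comp_tendstoUniformlyOn_of_isCompact (hK.image hcb) hstrain).mono
      cubeΩ_subset_closedBall)
  have hconv : Tendsto (fun N => A.d2Eaeps N Z q) atTop (𝓝 (A.d2EcΩ Z q)) := by
    have := hdefect.add hriemann
    simp only [Function.comp_def, sub_add_cancel, zero_add] at this
    exact this
  exact tendsto_sub_nhds_zero_iff.2 (hconv.comp (tendsto_add_atTop_nat 1))

/-- Lemma: convergence of Hessians.
For periodic fields `Z ∈ C³(Ω, ℝ^n)`, `q_α ∈ C²(Ω, ℝ^n)` and the atomistic
fields `z^ε_α = Z + ε q_α`, `ε = 1/N`, one has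
`⟨δ²E^a_ε(0) z^ε, z^ε⟩ − ⟨δ²E^c_Ω(0)(Z,q), (Z,q)⟩ → 0` as `ε → 0`. -/
theorem cauchy_born_hessian_convergence {d S n : ℕ} (A : MLSetting d S n)
    (Z : Vec d → Vec n) (q : Fin S → Vec d → Vec n)
    (hZ : ContDiff ℝ 3 Z) (hq : ∀ α, ContDiff ℝ 2 (q α))
    (hZper : ZPeriodic Z) (hqper : ∀ α, ZPeriodic (q α)) :
    Filter.Tendsto (fun N : ℕ => A.d2Eaeps (N + 1) Z q - A.d2EcΩ Z q)
      Filter.atTop (nhds 0) :=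
  cauchy_born_hessian_convergence_general A Z q hZ hq
end
end

section
/- Suppose there exists a displacement u ∈ 𝒰 and γ_a > 0 such that ⟨δ²E^a(u)v, v⟩ ≥ γ_a ‖v‖_{a1}² for all v ∈ 𝒰_0. Then the homogeneous reference configuration is also stable: ⟨δ²E^a_hom(0)v, v⟩ ≥ γ_a ‖v‖_{a1}² for all v ∈ 𝒰_0. -/
open scoped BigOperators
noncomputable section

/-! Translating a test displacement `v` far along a lattice direction leaves `‖v‖_{a1}` and
the test space unchanged, but moves the finitely many bonds where `Dv ≠ 0` into the region where
the site potential is the homogeneous one and where `Du → 0` (as `u` has finite energy). Hence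
the coercivity bound for `δ²E^a(u)` at the translates passes in the limit to `δ²E^a_hom(0)`. -/

open Filter Topology

theorem tendsto_cofinite_zero_of_summable_sum_norm_sq {α ι E : Type*} [Fintype ι]
    [SeminormedAddCommGroup E] {f : α → ι → E}
    (hf : Summable fun a => ∑ i, ‖f a i‖ ^ 2) : Tendsto f cofinite (𝓝 0) := by
  refine squeeze_zero_norm (fun a => (pi_norm_le_iff_of_nonneg (Real.sqrt_nonneg _)).2
    fun i => Real.le_sqrt_of_sq_le ?_) (by simpa using hf.tendsto_cofinite_zero.sqrt)
  exact Finset.single_le_sum (f := fun i => ‖f a i‖ ^ 2) (fun _ _ => by positivity)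
    (Finset.mem_univ i)

theorem tendsto_norm_add_nsmul_atTop {E : Type*} [NormedAddCommGroup E] [NormedSpace ℝ E]
    (a : E) {w : E} (hw : w ≠ 0) : Tendsto (fun k : ℕ => ‖a + k • w‖) atTop atTop := by
  refine tendsto_atTop_mono (fun k => ?_) <|
    tendsto_atTop_add_const_right _ (-‖a‖) <|
      tendsto_natCast_atTop_atTop.atTop_mul_const (norm_pos_iff.2 hw)
  have := norm_sub_norm_le (k • w) (-a)
  rw [RCLike.norm_nsmul ℝ, norm_neg, sub_neg_eq_add, add_comm, nsmul_eq_mul] at this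
  linarith

theorem tendsto_add_nsmul_cofinite {G : Type*} [AddCommGroup G] [IsAddTorsionFree G]
    (ζ : G) {ρ : G} (hρ : ρ ≠ 0) : Tendsto (fun k : ℕ => ζ + k • ρ) atTop cofinite := by
  rw [← Nat.cofinite_eq_atTop]
  have hinj : Function.Injective fun k : ℕ => k • ρ :=
    injective_nsmul_iff_not_isOfFinAddOrder.2 (not_isOfFinAddOrder_of_isAddTorsionFree hρ)
  exact ((add_right_injective ζ).comp hinj).tendsto_cofinite

theorem tsum_iteratedFDeriv_two_eq_sum {ι E : Type*} [NormedAddCommGroup E] [NormedSpace ℝ E]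
    (f : ι → E → ℝ) (x w : ι → E) {K : Finset ι} (hw : ∀ i ∉ K, w i = 0) :
    ∑' i, iteratedFDeriv ℝ 2 (f i) (x i) ![w i, w i] =
      ∑ i ∈ K, iteratedFDeriv ℝ 2 (f i) (x i) ![w i, w i] :=
  tsum_eq_sum fun i hi => ContinuousMultilinearMap.map_coord_zero _ 0 (by simp [hw i hi])

theorem latpos_add {d : ℕ} (F : Matrix (Fin d) (Fin d) ℝ) (ξ η : ZLat d) :
    latpos F (ξ + η) = latpos F ξ + latpos F η := by
  ext i
  simp [latpos, mul_add, Finset.sum_add_distrib]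

theorem latpos_nsmul {d : ℕ} (F : Matrix (Fin d) (Fin d) ℝ) (k : ℕ) (ξ : ZLat d) :
    latpos F (k • ξ) = k • latpos F ξ := by
  ext i
  simp [latpos, Finset.mul_sum, mul_left_comm]

theorem latpos_ne_zero {d : ℕ} {F : Matrix (Fin d) (Fin d) ℝ} (hF : F.det ≠ 0) {ξ : ZLat d}
    (hξ : ξ ≠ 0) : latpos F ξ ≠ 0 := by
  intro h
  refine hξ (funext fun j => ?_)
  have hmul : F.mulVec (fun j => (ξ j : ℝ)) = 0 := funext fun i => congrArg (· i) h
  simpa using congrFun (Matrix.eq_zero_of_mulVec_eq_zero hF hmul) j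

def Disp.translate {d S n : ℕ} (t : ZLat d) (v : Disp d S n) : Disp d S n := fun ξ => v (ξ - t)

theorem MLSetting.nontrivial_zLat {d S n : ℕ} (A : MLSetting d S n) :
    Nontrivial (ZLat d) := by
  rcases A.hd with rfl | rfl <;> infer_instance

namespace MLSetting

variable {d S n : ℕ} (A : MLSetting d S n)

theorem Dm_translate (t : ZLat d) (v : Disp d S n) (ξ : ZLat d) :
    A.Dm (Disp.translate t v) ξ = A.Dm v (ξ - t) := by
  funext e
  simp only [Dm, Disp.translate, add_sub_right_comm]

theorem Dm_zero (ξ : ZLat d) : A.Dm 0 ξ = 0 := by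
  funext e
  simp [Dm]

theorem a1normSq_translate (t : ZLat d) (v : Disp d S n) :
    A.a1normSq (Disp.translate t v) = A.a1normSq v := by
  simp only [a1normSq, Dm_translate]
  exact (Equiv.subRight t).tsum_eq fun ξ => ∑ e, ‖A.Dm v ξ e‖ ^ 2

theorem d2E_translate (u v : Disp d S n) (t : ZLat d) :
    A.d2E u (Disp.translate t v) (Disp.translate t v) =
      ∑' ξ, iteratedFDeriv ℝ 2 (A.Vsite (ξ + t)) (A.yvec + A.Dm u (ξ + t))
        ![A.Dm v ξ, A.Dm v ξ] := by
  simp only [d2E, Dm_translate]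
  rw [← (Equiv.addRight t).tsum_eq]
  simp only [Equiv.coe_addRight, add_sub_cancel_right]

theorem d2Ehom_zero (v w : Disp d S n) :
    A.d2Ehom 0 v w = ∑' ξ, iteratedFDeriv ℝ 2 A.Vhom A.yvec ![A.Dm v ξ, A.Dm w ξ] := by
  simp only [d2Ehom, Dm_zero, add_zero]

theorem FiniteEnergy.tendsto_Dm {u : Disp d S n} (hu : A.FiniteEnergy u) :
    Tendsto (A.Dm u) cofinite (𝓝 0) :=
  tendsto_cofinite_zero_of_summable_sum_norm_sq hu

namespace InU0

variable {A} {v : Disp d S n}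

theorem translate (hv : A.InU0 v) (t : ZLat d) : A.InU0 (Disp.translate t v) := by
  obtain ⟨T, hT⟩ := hv
  refine ⟨T.image (· + t), fun ξ hξ => ?_⟩
  obtain ⟨hshift, hspecies⟩ :=
    hT (ξ - t) fun h => hξ (Finset.mem_image.2 ⟨ξ - t, h, sub_add_cancel ξ t⟩)
  refine ⟨fun ρ hρ => ?_, hspecies⟩
  simpa only [Disp.translate, add_sub_right_comm] using hshift ρ hρ

theorem exists_Dm_eq_zero (hv : A.InU0 v) :
    ∃ K : Finset (ZLat d), ∀ ξ ∉ K, A.Dm v ξ = 0 := by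
  classical
  obtain ⟨T, hT⟩ := hv
  refine ⟨T ∪ A.R1.biUnion fun ρ => T.image (· - ρ), fun ξ hξ => funext fun e => ?_⟩
  obtain ⟨⟨ρ, α, β⟩, he⟩ := e
  have hρ : ρ ∈ A.R1 := Finset.mem_image.2 ⟨_, he, rfl⟩
  have hξρ : ξ + ρ ∉ T := fun h => hξ <| Finset.mem_union_right _ <|
    Finset.mem_biUnion.2 ⟨ρ, hρ, Finset.mem_image.2 ⟨ξ + ρ, h, add_sub_cancel_right ξ ρ⟩⟩
  obtain ⟨hshift, hspecies⟩ := hT ξ fun h => hξ (Finset.mem_union_left _ h)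
  show v (ξ + ρ) β - v ξ α = 0
  rw [(hT (ξ + ρ) hξρ).2 β, hspecies α, hshift ρ hρ, sub_self]

end InU0

theorem eventually_Vsite_add_nsmul_eq_Vhom (ζ : ZLat d) {ρ : ZLat d} (hρ : ρ ≠ 0) :
    ∀ᶠ k : ℕ in atTop, A.Vsite (ζ + k • ρ) = A.Vhom := by
  have hF : latpos A.F ρ ≠ 0 := latpos_ne_zero (by simp [A.hdetF]) hρ
  filter_upwards [(tendsto_norm_add_nsmul_atTop (latpos A.F ζ) hF).eventually_ge_atTop A.Rdef]
    with k hk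
  exact A.hVsite_hom _ (by rwa [latpos_add, latpos_nsmul])

theorem tendsto_d2E_translate {u v : Disp d S n} (hu : A.FiniteEnergy u) (hv : A.InU0 v)
    {ρ : ZLat d} (hρ : ρ ≠ 0) :
    Tendsto (fun k : ℕ => A.d2E u (Disp.translate (k • ρ) v) (Disp.translate (k • ρ) v))
      atTop (𝓝 (A.d2Ehom 0 v v)) := by
  obtain ⟨K, hK⟩ := hv.exists_Dm_eq_zero
  simp only [d2E_translate, d2Ehom_zero]
  rw [tsum_iteratedFDeriv_two_eq_sum _ _ _ hK]
  refine (tendsto_finsetSum K fun ζ _ => ?_).congr fun k =>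
    (tsum_iteratedFDeriv_two_eq_sum _ _ _ hK).symm
  have harg : Tendsto (fun k : ℕ => A.yvec + A.Dm u (ζ + k • ρ)) atTop (𝓝 A.yvec) := by
    simpa using tendsto_const_nhds.add (hu.tendsto_Dm.comp (tendsto_add_nsmul_cofinite ζ hρ))
  have hcont : Continuous fun g => iteratedFDeriv ℝ 2 A.Vhom g ![A.Dm v ζ, A.Dm v ζ] :=
    (continuous_eval_const _).comp (A.hVhom_smooth.continuous_iteratedFDeriv (by norm_num))
  refine ((hcont.tendsto _).comp harg).congr' ?_
  filter_upwards [A.eventually_Vsite_add_nsmul_eq_Vhom ζ hρ] with k hk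
  simp only [Function.comp_apply, hk]

end MLSetting

theorem defect_stability_implies_homogeneous_stability_general {d S n : ℕ}
    (A : MLSetting d S n) (γa : ℝ)
    (h : ∃ u : Disp d S n, A.FiniteEnergy u ∧
      ∀ v : Disp d S n, A.InU0 v → γa * A.a1normSq v ≤ A.d2E u v v) :
    ∀ v : Disp d S n, A.InU0 v → γa * A.a1normSq v ≤ A.d2Ehom 0 v v := by
  obtain ⟨u, hu, hstab⟩ := h
  intro v hv
  have := A.nontrivial_zLat
  obtain ⟨ρ, hρ⟩ := exists_ne (0 : ZLat d)
  refine ge_of_tendsto' (A.tendsto_d2E_translate hu hv hρ) fun k => ?_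
  rw [← A.a1normSq_translate (k • ρ)]
  exact hstab _ (hv.translate _)

/-- Lemma: lattice stability.
If there exists any finite-energy displacement `u` at which the defective
energy Hessian is coercive, `⟨δ²E^a(u)v, v⟩ ≥ γ_a ‖v‖_{a1}²` for all test
displacements `v ∈ 𝒰_0`, then the homogeneous reference configuration is
stable with the same constant: `⟨δ²E^a_hom(0)v, v⟩ ≥ γ_a ‖v‖_{a1}²` for all
`v ∈ 𝒰_0`. -/
theorem defect_stability_implies_homogeneous_stability {d S n : ℕ}
    (A : MLSetting d S n) (γa : ℝ) (hγa : 0 < γa)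
    (h : ∃ u : Disp d S n, A.FiniteEnergy u ∧
      ∀ v : Disp d S n, A.InU0 v → γa * A.a1normSq v ≤ A.d2E u v v) :
    ∀ v : Disp d S n, A.InU0 v → γa * A.a1normSq v ≤ A.d2Ehom 0 v v :=
  defect_stability_implies_homogeneous_stability_general A γa h
end
end
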